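/- Let s be a symbol with level(s) > 0 and let p = p_ℓ · p_r with p_ℓ and p_r nonempty strings over Σ. Then p has an anchored occurrence in str(s) with main anchor p_ℓ|p_r if and only if p_ℓ|p_r is a substring of anch(s). Moreover, writing anch(s) = w_ℓ|w_r: if s = (s₁,s₂) then there is exactly one such anchored occurrence and it starts at position 1 + |w_ℓ| − |p_ℓ| of str(s); and if s = (s′,k) then there are exactly 1 + ⌊(|w_r| − |p_r|)/|w_ℓ|⌋ such anchored occurrences, starting at positions 1 + i·|w_ℓ| − |p_ℓ| for i = 1, …, 1 + ⌊(|w_r| − |p_r|)/|w_ℓ|⌋. -/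

import Mathlib

namespace DynStr

/-- The set `𝒮` of symbols over the alphabet `α`:
base letters, pairing symbols `(S₁,S₂)` and power symbols `(S,k)`. -/
inductive Sym (α : Type) : Type where
  | base : α → Sym α
  | pair : Sym α → Sym α → Sym α
  | pow  : Sym α → ℕ → Sym α
deriving DecidableEq

variable {α : Type} [DecidableEq α]

/-- The string over `Σ` generated by a symbol. -/
def strSym : Sym α → List α
  | .base a => [a]
  | .pair s t => strSym s ++ strSym t
  | .pow s k => (List.replicate k (strSym s)).flatten

/-- Run-length pairs: the maximal blocks of equal elements, with multiplicities. -/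
def runs {β : Type} [DecidableEq β] : List β → List (β × ℕ)
  | [] => []
  | a :: l =>
    match runs l with
    | [] => [(a, 1)]
    | (b, k) :: rest => if a = b then (b, k + 1) :: rest else (a, 1) :: (b, k) :: rest

/-- `|RLE(w)|`: the number of blocks in the run-length encoding of `w`. -/
def rleLen {β : Type} [DecidableEq β] (w : List β) : ℕ := (runs w).length

/-- The `Rle` function: replace every maximal block `S^k` with `k ≥ 2` by `(S,k)`. -/
def rle : List (Sym α) → List (Sym α) :=
  fun w => (runs w).map fun p => if 2 ≤ p.2 then Sym.pow p.1 p.2 else p.1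

/-- `Compressᵢ` with bit function `g`: replace every (disjoint, greedily-from-the-left
determined, i.e. uniquely determined) adjacent pair `S S'` with `g S = 0`, `g S' = 1`
by the symbol `(S,S')`. -/
def compress (g : Sym α → Bool) : List (Sym α) → List (Sym α)
  | [] => []
  | [a] => [a]
  | a :: b :: l =>
    if g a = false ∧ g b = true then Sym.pair a b :: compress g l
    else a :: compress g (b :: l)

/-- `shrinkᵢ` (for `i ≥ 1`): `Rle` for odd `i`, `Compress_{i/2}` for even `i`. -/
def shrinkStep (h : ℕ → Sym α → Bool) (i : ℕ) (w : List (Sym α)) : List (Sym α) :=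
  if i % 2 = 1 then rle w else compress (h (i / 2)) w

/-- `shrink^i`, the iterated parsing function. -/
def shrinkIter (h : ℕ → Sym α → Bool) : ℕ → List (Sym α) → List (Sym α)
  | 0, w => w
  | i + 1, w => shrinkStep h (i + 1) (shrinkIter h i w)

/-- `Depth(w)`: the least `i` with `|shrink^i(w)| = 1`. -/
noncomputable def depth (h : ℕ → Sym α → Bool) (w : List (Sym α)) : ℕ :=
  sInf {i | (shrinkIter h i w).length = 1}

/-- A string over `Σ` viewed as a string of (base) symbols. -/
def embed (w : List α) : List (Sym α) := w.map Sym.base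

/-- Sizes of the blocks formed by `Compress` with bit function `g`. -/
def compBlocks (g : Sym α → Bool) : List (Sym α) → List ℕ
  | [] => []
  | [_] => [1]
  | a :: b :: l =>
    if g a = false ∧ g b = true then 2 :: compBlocks g l
    else 1 :: compBlocks g (b :: l)

/-- Sizes of the blocks formed by `shrinkᵢ`. -/
def stepBlocks (h : ℕ → Sym α → Bool) (i : ℕ) (w : List (Sym α)) : List ℕ :=
  if i % 2 = 1 then (runs w).map Prod.snd else compBlocks (h (i / 2)) w

/-- Sizes of the blocks formed when passing from level `l` to level `l+1` of the
uncompressed parse tree of `w`. -/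
def blocksAt (h : ℕ → Sym α → Bool) (w : List (Sym α)) (l : ℕ) : List ℕ :=
  stepBlocks h (l + 1) (shrinkIter h l w)

/-- Index of the block (in a list of block sizes) containing position `j`. -/
def blockOf : List ℕ → ℕ → ℕ
  | [], _ => 0
  | b :: bs, j => if j < b then 0 else blockOf bs (j - b) + 1

/-- A node of the uncompressed parse tree `T̄(w)`: the `idx`-th symbol occurrence
(0-indexed) of `shrink^level(w)`. -/
structure TNode where
  level : ℕ
  idx : ℕ
deriving DecidableEq

/-- `v` is an actual node of `T̄(w)`. -/
def IsNode (h : ℕ → Sym α → Bool) (w : List (Sym α)) (v : TNode) : Prop :=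
  v.level ≤ depth h w ∧ v.idx < (shrinkIter h v.level w).length

/-- The signature (symbol) of a node. -/
def sigAt (h : ℕ → Sym α → Bool) (w : List (Sym α)) (v : TNode) : Option (Sym α) :=
  (shrinkIter h v.level w)[v.idx]?

/-- Index in `w` (i.e. on level 0) of the first position below the `j`-th symbol of
`shrink^l(w)`. -/
def startIdx (h : ℕ → Sym α → Bool) (w : List (Sym α)) : ℕ → ℕ → ℕ
  | 0, j => j
  | l + 1, j => startIdx h w l (((blocksAt h w l).take j).sum)

/-- The first level-0 position of the fragment represented by `v`. -/
def begIdx (h : ℕ → Sym α → Bool) (w : List (Sym α)) (v : TNode) : ℕ :=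
  startIdx h w v.level v.idx

/-- One past the last level-0 position of the fragment represented by `v`. -/
def endIdx (h : ℕ → Sym α → Bool) (w : List (Sym α)) (v : TNode) : ℕ :=
  startIdx h w v.level (v.idx + 1)

/-- `par(v)`. -/
def parNode (h : ℕ → Sym α → Bool) (w : List (Sym α)) (v : TNode) : TNode :=
  ⟨v.level + 1, blockOf (blocksAt h w v.level) v.idx⟩

/-- The parent of `v` exists in `T̄(w)`. -/
def HasPar (h : ℕ → Sym α → Bool) (w : List (Sym α)) (v : TNode) : Prop :=
  IsNode h w v ∧ v.level < depth h w

/-- The number of children of `v` (for `v.level ≥ 1`). -/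
def degree (h : ℕ → Sym α → Bool) (w : List (Sym α)) (v : TNode) : ℕ :=
  (blocksAt h w (v.level - 1)).getD v.idx 0

/-- `child(v,k)`, the `k`-th child of `v` (`k` is 1-indexed). -/
def childNode (h : ℕ → Sym α → Bool) (w : List (Sym α)) (v : TNode) (k : ℕ) : TNode :=
  ⟨v.level - 1, ((blocksAt h w (v.level - 1)).take v.idx).sum + (k - 1)⟩

/-- The `k`-th child of `v` exists in `T̄(w)`. -/
def HasChild (h : ℕ → Sym α → Bool) (w : List (Sym α)) (v : TNode) (k : ℕ) : Prop :=
  IsNode h w v ∧ 1 ≤ v.level ∧ 1 ≤ k ∧ k ≤ degree h w v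

/-- `left(v)`. -/
def leftNode (v : TNode) : TNode := ⟨v.level, v.idx - 1⟩

/-- `right(v)`. -/
def rightNode (v : TNode) : TNode := ⟨v.level, v.idx + 1⟩

/-- `left(v)` exists in `T̄(w)`. -/
def HasLeft (h : ℕ → Sym α → Bool) (w : List (Sym α)) (v : TNode) : Prop :=
  IsNode h w v ∧ 1 ≤ v.idx

/-- `right(v)` exists in `T̄(w)`. -/
def HasRight (h : ℕ → Sym α → Bool) (w : List (Sym α)) (v : TNode) : Prop :=
  IsNode h w v ∧ v.idx + 1 < (shrinkIter h v.level w).length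

/-- `v'` is the counterpart (`v ≈ v'`) of the node `v` of `T̄(w)` with respect to the
extension `x·w·y`: a node of `T̄(xwy)` of the same level with the same signature,
representing the fragment of `xwy` naturally corresponding to the fragment of `w`
represented by `v`. -/
def Counterpart (h : ℕ → Sym α → Bool) (x w y : List α) (v v' : TNode) : Prop :=
  IsNode h (embed (x ++ w ++ y)) v' ∧
  v'.level = v.level ∧
  sigAt h (embed (x ++ w ++ y)) v' = sigAt h (embed w) v ∧
  begIdx h (embed (x ++ w ++ y)) v' = x.length + begIdx h (embed w) v ∧
  endIdx h (embed (x ++ w ++ y)) v' = x.length + endIdx h (embed w) v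

/-- `v` is preserved in the extension `x·w·y`. -/
def Preserved (h : ℕ → Sym α → Bool) (x w y : List α) (v : TNode) : Prop :=
  ∃ v', Counterpart h x w y v v'

/-- `v` is right context-insensitive: preserved in every right extension. -/
def RightCI (h : ℕ → Sym α → Bool) (w : List α) (v : TNode) : Prop :=
  ∀ y : List α, Preserved h [] w y v

/-- `v` is left context-insensitive: preserved in every left extension. -/
def LeftCI (h : ℕ → Sym α → Bool) (w : List α) (v : TNode) : Prop :=
  ∀ x : List α, Preserved h x w [] v

/-- `v` is context-insensitive: preserved in every extension. -/
def ContextIns (h : ℕ → Sym α → Bool) (w : List α) (v : TNode) : Prop :=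
  ∀ x y : List α, Preserved h x w y v

/-- `u` is a (not necessarily proper) ancestor of `v` in `T̄(w)`. -/
def Ancestor (h : ℕ → Sym α → Bool) (w : List (Sym α)) (u v : TNode) : Prop :=
  v.level ≤ u.level ∧ begIdx h w u ≤ begIdx h w v ∧ endIdx h w v ≤ endIdx h w u

/-- `u` is a proper ancestor of `v`. -/
def ProperAnc (h : ℕ → Sym α → Bool) (w : List (Sym α)) (u v : TNode) : Prop :=
  Ancestor h w u v ∧ u ≠ v

/-- The fragments of the listed nodes tile `w[a..]` consecutively from left to right. -/
def chainFrom (h : ℕ → Sym α → Bool) (w : List (Sym α)) : ℕ → List TNode → Prop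
  | a, [] => a = w.length
  | a, v :: L => begIdx h w v = a ∧ chainFrom h w (endIdx h w v) L

/-- `L` is a layer of the uncompressed parse tree `T̄(w)`, listed from left to right:
every leaf has exactly one ancestor in `L` (equivalently, the fragments of
the nodes of `L` tile `w`). -/
def IsBarLayer (h : ℕ → Sym α → Bool) (w : List (Sym α)) (L : List TNode) : Prop :=
  (∀ v ∈ L, IsNode h w v) ∧ chainFrom h w 0 L

/-- `v` is a node of the compressed parse tree `T(w)` (obtained from `T̄(w)` by
dissolving nodes with exactly one child). -/
def InCompTree (h : ℕ → Sym α → Bool) (w : List (Sym α)) (v : TNode) : Prop :=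
  IsNode h w v ∧ (v.level = 0 ∨ 2 ≤ degree h w v)

/-- `L` is a layer of the compressed parse tree `T(w)`, listed from left to right. -/
def IsCompLayer (h : ℕ → Sym α → Bool) (w : List (Sym α)) (L : List TNode) : Prop :=
  (∀ v ∈ L, InCompTree h w v) ∧ chainFrom h w 0 L

/-- `u` is the parent of `v` in the compressed parse tree `T(w)`:
the nearest proper ancestor of `v` that is a node of `T(w)`. -/
def CompParent (h : ℕ → Sym α → Bool) (w : List (Sym α)) (u v : TNode) : Prop :=
  InCompTree h w u ∧ InCompTree h w v ∧ ProperAnc h w u v ∧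
  ∀ z, InCompTree h w z → ProperAnc h w z v → Ancestor h w z u

/-- `D` is the decomposition of `w` corresponding to the layer `L` of `T̄(w)`. -/
def IsDecompOf (h : ℕ → Sym α → Bool) (w : List α) (D : List (Sym α)) (L : List TNode) : Prop :=
  IsBarLayer h (embed w) L ∧ L.map (sigAt h (embed w)) = D.map some

/-- `D` is a decomposition of `w`. -/
def IsDecomp (h : ℕ → Sym α → Bool) (w : List α) (D : List (Sym α)) : Prop :=
  ∃ L, IsDecompOf h w D L

/-- `D` is a context-insensitive decomposition of `w`. -/
def IsCIDecomp (h : ℕ → Sym α → Bool) (w : List α) (D : List (Sym α)) : Prop :=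
  ∃ L, IsDecompOf h w D L ∧ ∀ v ∈ L, ContextIns h w v

/-- `D` is a right context-insensitive decomposition of `w`. -/
def IsRightCIDecomp (h : ℕ → Sym α → Bool) (w : List α) (D : List (Sym α)) : Prop :=
  ∃ L, IsDecompOf h w D L ∧ ∀ v ∈ L, RightCI h w v

/-- `D` is a left context-insensitive decomposition of `w`. -/
def IsLeftCIDecomp (h : ℕ → Sym α → Bool) (w : List α) (D : List (Sym α)) : Prop :=
  ∃ L, IsDecompOf h w D L ∧ ∀ v ∈ L, LeftCI h w v

/-- The level of a symbol. -/
noncomputable def symLevel (h : ℕ → Sym α → Bool) : Sym α → ℕ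
  | .base _ => 0
  | .pow s _ => symLevel h s + 1
  | .pair s t =>
      sInf {l | l % 2 = 0 ∧ max (symLevel h s) (symLevel h t) < l ∧
                h (l / 2) s = false ∧ h (l / 2) t = true}

/-- `S` is a consistent symbol: it occurs in `shrink^i(w)` for some nonempty `w ∈ Σ⁺`. -/
def Consistent (h : ℕ → Sym α → Bool) (S : Sym α) : Prop :=
  ∃ (w : List α) (i : ℕ), w ≠ [] ∧ S ∈ shrinkIter h i (embed w)

/-- Longest common prefix of two lists. -/
def lcp {β : Type} [DecidableEq β] : List β → List β → List β
  | a :: l, b :: m => if a = b then a :: lcp l m else []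
  | _, _ => []

end DynStr
namespace DynStr

variable {α : Type} [DecidableEq α]

/-- The nodes of the trie `T̄ᵢ` of the strings `shrink^i(w)` for `w ∈ Wᵢ`,
identified with their values (prefixes of the stored strings). -/
def trieNodes (h : ℕ → Sym α → Bool) (W : Finset (List α)) (i : ℕ) :
    Set (List (Sym α)) :=
  {p | ∃ w ∈ W, i ≤ depth h (embed w) ∧ p <+: shrinkIter h i (embed w)}

/-- `leafᵢ(w)`, the terminal node of `T̄ᵢ` with value `shrink^i(w)`. -/
def leafNode (h : ℕ → Sym α → Bool) (i : ℕ) (w : List α) : List (Sym α) :=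
  shrinkIter h i (embed w)

/-- `b = link(a)` for a node `a` of `T̄ᵢ` (`i > 0`): `b` is the node of `T̄_{i-1}`
with `val(a) = shrinkᵢ(val(b))`. -/
def IsLink (h : ℕ → Sym α → Bool) (W : Finset (List α)) (i : ℕ)
    (a b : List (Sym α)) : Prop :=
  a ∈ trieNodes h W i ∧ b ∈ trieNodes h W (i - 1) ∧ a = shrinkStep h i b

/-- `p` is a down-node of `T̄ᵢ`: the root, a branching node, or a terminal node. -/
def IsDown (h : ℕ → Sym α → Bool) (W : Finset (List α)) (i : ℕ)
    (p : List (Sym α)) : Prop :=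
  p ∈ trieNodes h W i ∧
  (p = [] ∨
   (∃ S T : Sym α, S ≠ T ∧ p ++ [S] ∈ trieNodes h W i ∧ p ++ [T] ∈ trieNodes h W i) ∨
   ∃ w ∈ W, i ≤ depth h (embed w) ∧ p = leafNode h i w)

/-- `p` is an up-node of `T̄ᵢ`: it is `link(a)` for some down-node `a` of `T̄_{i+1}`. -/
def IsUp (h : ℕ → Sym α → Bool) (W : Finset (List α)) (i : ℕ)
    (p : List (Sym α)) : Prop :=
  p ∈ trieNodes h W i ∧ ∃ a, IsDown h W (i + 1) a ∧ IsLink h W (i + 1) a p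

/-- `p` is an explicit node of the partially compressed trie `Tᵢ`. -/
def IsExplicit (h : ℕ → Sym α → Bool) (W : Finset (List α)) (i : ℕ)
    (p : List (Sym α)) : Prop :=
  IsDown h W i p ∨ IsUp h W i p

/-- `p` is the mount of `w` in `T̄ᵢ`: the lowest node of `T̄ᵢ` whose value is a
prefix of `shrink^i(w)`. -/
def Mount (h : ℕ → Sym α → Bool) (W : Finset (List α)) (i : ℕ)
    (w : List α) (p : List (Sym α)) : Prop :=
  p ∈ trieNodes h W i ∧ p <+: shrinkIter h i (embed w) ∧
  ∀ q ∈ trieNodes h W i, q <+: shrinkIter h i (embed w) → q <+: p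

/-- `a` is the nearest explicit ancestor of the node `b` of `T̄ᵢ`. -/
def NearestExplAnc (h : ℕ → Sym α → Bool) (W : Finset (List α)) (i : ℕ)
    (b a : List (Sym α)) : Prop :=
  IsExplicit h W i a ∧ a <+: b ∧ ∀ c, IsExplicit h W i c → c <+: b → c <+: a

/-- `d` is the nearest explicit descendant of the node `b` of `T̄ᵢ`. -/
def NearestExplDesc (h : ℕ → Sym α → Bool) (W : Finset (List α)) (i : ℕ)
    (b d : List (Sym α)) : Prop :=
  IsExplicit h W i d ∧ b <+: d ∧ ∀ c, IsExplicit h W i c → b <+: c → d <+: c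

/-- `anch(s)`, the anchored string of a (positive-level) symbol. -/
def anch : Sym α → List α × List α
  | .base _ => ([], [])
  | .pair s t => (strSym s, strSym t)
  | .pow s k => (strSym s, (List.replicate (k - 1) (strSym s)).flatten)

/-- The positions of the internal boundaries of the partition of `str(s)` induced
by the production rule of `s`. -/
def cuts : Sym α → List ℕ
  | .base _ => []
  | .pair s _ => [(strSym s).length]
  | .pow s k => (List.range (k - 1)).map fun j => (j + 1) * (strSym s).length

/-- `p` occurs in `str(s)` at (0-indexed) position `t`. -/
def OccAt (s : Sym α) (p : List α) (t : ℕ) : Prop :=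
  t + p.length ≤ (strSym s).length ∧ ((strSym s).drop t).take p.length = p

/-- The occurrence of `p` in `str(s)` at position `t` is anchored: it crosses one of
the internal boundaries of the partition induced by the production rule of `s`. -/
def AnchoredOccAt (s : Sym α) (p : List α) (t : ℕ) : Prop :=
  OccAt s p t ∧ ∃ c ∈ cuts s, t < c ∧ c < t + p.length

/-- The occurrence of `p` in `str(s)` at position `t` is anchored with main anchor
`pl|pr`: `pl` is the part of the occurrence before the first internal boundary it
crosses. -/
def MainAnchorAt (s : Sym α) (p : List α) (t : ℕ) (pl pr : List α) : Prop :=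
  OccAt s p t ∧ ∃ c ∈ cuts s, t < c ∧ c < t + p.length ∧
    (∀ c' ∈ cuts s, t < c' → c ≤ c') ∧
    pl = p.take (c - t) ∧ pr = p.drop (c - t)

end DynStr
namespace DynStr


variable {α : Type} [DecidableEq α]

lemma length_flat (w : List α) (k : ℕ) :
    ((List.replicate k w).flatten).length = k * w.length := by
  induction k with
  | zero => simp
  | succ n ih =>
    rw [List.replicate_succ, List.flatten_cons, List.length_append, ih, Nat.succ_mul]
    ring

lemma flat_add (w : List α) (m n : ℕ) :
    (List.replicate (m + n) w).flatten =
      (List.replicate m w).flatten ++ (List.replicate n w).flatten := by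
  rw [List.replicate_add, List.flatten_append]

lemma flat_succ_left (w : List α) {i : ℕ} (hi : 1 ≤ i) :
    (List.replicate i w).flatten = (List.replicate (i - 1) w).flatten ++ w := by
  conv_lhs => rw [show i = (i - 1) + 1 from by omega]
  rw [flat_add]
  simp

lemma suffix_flat (w : List α) {i : ℕ} (hi : 1 ≤ i) :
    w <:+ (List.replicate i w).flatten := by
  rw [flat_succ_left w hi]
  exact List.suffix_append _ _

lemma prefix_flat (w : List α) {i j : ℕ} (h : i ≤ j) :
    (List.replicate i w).flatten <+: (List.replicate j w).flatten := by
  obtain ⟨d, rfl⟩ := Nat.exists_eq_add_of_le h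
  rw [flat_add]
  exact List.prefix_append _ _

lemma suffix_of_suffix_length_le {pl x w : List α} (h : pl <:+ x ++ w)
    (hl : pl.length ≤ w.length) : pl <:+ w := by
  rw [List.suffix_iff_eq_drop] at h ⊢
  rw [List.length_append, List.drop_append,
    List.drop_eq_nil_of_le (by omega : x.length ≤ x.length + w.length - pl.length),
    List.nil_append] at h
  have he : w.length - pl.length = x.length + w.length - pl.length - x.length := by omega
  rw [he]
  exact h

lemma prefix_of_prefix_length_le {pr u v : List α} (h : pr <+: v) (hu : u <+: v)
    (hl : pr.length ≤ u.length) : pr <+: u := by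
  rw [List.prefix_iff_eq_take] at h ⊢
  obtain ⟨q, rfl⟩ := hu
  rw [List.take_append, Nat.sub_eq_zero_of_le hl, List.take_zero,
    List.append_nil] at h
  exact h

lemma occ_split {u v pl pr : List α} (hpr : pr ≠ []) {t : ℕ}
    (ht : t + pl.length = u.length) :
    (t + (pl ++ pr).length ≤ (u ++ v).length ∧
      List.take (pl ++ pr).length (List.drop t (u ++ v)) = pl ++ pr) ↔
    (pl <:+ u ∧ pr <+: v) := by
  have htu : t ≤ u.length := by omega
  have hdrop : List.drop t (u ++ v) = u.drop t ++ v := by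
    rw [List.drop_append, Nat.sub_eq_zero_of_le htu, List.drop_zero]
  have hlen : (u.drop t).length = pl.length := by
    rw [List.length_drop]; omega
  have htake : List.take (pl ++ pr).length (u.drop t ++ v) =
      u.drop t ++ v.take pr.length := by
    rw [List.take_append]
    congr 1
    · exact List.take_of_length_le (by rw [hlen, List.length_append]; omega)
    · congr 1; rw [hlen, List.length_append]; omega
  constructor
  · rintro ⟨hle, heq⟩
    rw [hdrop, htake] at heq
    obtain ⟨h1, h2⟩ := List.append_inj heq hlen
    exact ⟨h1 ▸ List.drop_suffix _ _, List.prefix_iff_eq_take.mpr h2.symm⟩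
  · rintro ⟨h1, h2⟩
    have hplu : pl.length ≤ u.length := h1.length_le
    have hprv : pr.length ≤ v.length := h2.length_le
    constructor
    · simp only [List.length_append]; omega
    · rw [hdrop, htake]
      congr 1
      · have he : t = u.length - pl.length := by omega
        rw [he]
        exact (List.suffix_iff_eq_drop.mp h1).symm
      · exact (List.prefix_iff_eq_take.mp h2).symm

lemma cut_eq {pl pr : List α} (hpr : pr ≠ []) {t c : ℕ} (htc : t < c)
    (h1 : pl = (pl ++ pr).take (c - t)) (h2 : pr = (pl ++ pr).drop (c - t)) :
    c = t + pl.length := by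
  by_cases hge : (pl ++ pr).length ≤ c - t
  · rw [List.drop_eq_nil_of_le hge] at h2
    exact absurd h2 hpr
  · push_neg at hge
    rw [List.length_append] at hge
    have hl := congrArg List.length h1
    rw [List.length_take, List.length_append] at hl
    omega

/-- For a symbol `s` with `level(s) > 0` and a pattern `p = pₗ · pᵣ`
(`pₗ, pᵣ` nonempty): `p` has an anchored occurrence in `str(s)` with main anchor
`pₗ|pᵣ` iff `pₗ|pᵣ` is a substring of `anch(s) = wₗ|wᵣ`. Moreover, if so: for
`s = (s₁,s₂)` there is exactly one such occurrence and it starts at position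
`1 + |wₗ| − |pₗ|` (1-indexed, i.e. `t + |pₗ| = |wₗ|` 0-indexed); for `s = (s',k)`
the occurrences are exactly those starting at positions `1 + i·|wₗ| − |pₗ|` for
`i = 1, …, 1 + ⌊(|wᵣ| − |pᵣ|)/|wₗ|⌋`. -/
theorem anchored_occurrence_characterization
    {α : Type} [DecidableEq α] (h : ℕ → Sym α → Bool) (s : Sym α)
    (hs : 0 < symLevel h s) (pl pr : List α) (hpl : pl ≠ []) (hpr : pr ≠ []) :
    ((∃ t, MainAnchorAt s (pl ++ pr) t pl pr) ↔
      (pl <:+ (anch s).1 ∧ pr <+: (anch s).2)) ∧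
    (pl <:+ (anch s).1 → pr <+: (anch s).2 →
      (∀ s₁ s₂ : Sym α, s = Sym.pair s₁ s₂ →
        ∀ t, MainAnchorAt s (pl ++ pr) t pl pr ↔
          t + pl.length = (anch s).1.length) ∧
      (∀ (s' : Sym α) (k : ℕ), s = Sym.pow s' k →
        ∀ t, MainAnchorAt s (pl ++ pr) t pl pr ↔
          ∃ i : ℕ, 1 ≤ i ∧
            i ≤ 1 + ((anch s).2.length - pr.length) / (anch s).1.length ∧
            t + pl.length = i * (anch s).1.length)) := by
  have hpl1 : 0 < pl.length := List.length_pos_iff.mpr hpl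
  have hpr1 : 0 < pr.length := List.length_pos_iff.mpr hpr
  cases s with
  | base a => simp [symLevel] at hs
  | pair s1 s2 =>
    simp only [anch]
    have key : ∀ t, MainAnchorAt (Sym.pair s1 s2) (pl ++ pr) t pl pr ↔
        (t + pl.length = (strSym s1).length ∧ pl <:+ strSym s1 ∧ pr <+: strSym s2) := by
      intro t
      constructor
      · rintro ⟨hocc, c, hc, htc, hct, hmin, h1, h2⟩
        simp only [cuts, List.mem_singleton] at hc
        subst hc
        have hceq := cut_eq hpr htc h1 h2
        have ht : t + pl.length = (strSym s1).length := by omega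
        refine ⟨ht, (occ_split hpr ht).mp ?_⟩
        simpa only [OccAt, strSym] using hocc
      · rintro ⟨ht, h1, h2⟩
        have hocc := (occ_split hpr ht).mpr ⟨h1, h2⟩
        refine ⟨by simpa only [OccAt, strSym] using hocc, (strSym s1).length,
          by simp [cuts], by omega, ?_, ?_, ?_, ?_⟩
        · rw [List.length_append]; omega
        · intro c' hc' _
          simp only [cuts, List.mem_singleton] at hc'
          omega
        · have he : (strSym s1).length - t = pl.length := by omega
          rw [he, List.take_left]
        · have he : (strSym s1).length - t = pl.length := by omega
          rw [he, List.drop_left]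
    refine ⟨?_, fun hsl hsr => ⟨?_, ?_⟩⟩
    · constructor
      · rintro ⟨t, ht⟩
        exact ((key t).mp ht).2
      · rintro ⟨h1, h2⟩
        have := h1.length_le
        exact ⟨(strSym s1).length - pl.length, (key _).mpr ⟨by omega, h1, h2⟩⟩
    · rintro s1' s2' heq t
      rw [key t]
      exact ⟨fun hh => hh.1, fun hh => ⟨hh, hsl, hsr⟩⟩
    · rintro s' k heq
      exact absurd heq (by simp)
  | pow s' k =>
    simp only [anch]
    have key : ∀ t, MainAnchorAt (Sym.pow s' k) (pl ++ pr) t pl pr ↔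
        ∃ i, 1 ≤ i ∧ i + 1 ≤ k ∧ t + pl.length = i * (strSym s').length ∧ pl <:+ (strSym s') ∧
          pr <+: (List.replicate (k - i) (strSym s')).flatten := by
      intro t
      have hstr : ∀ i, i ≤ k → strSym (Sym.pow s' k) =
          (List.replicate i (strSym s')).flatten ++ (List.replicate (k - i) (strSym s')).flatten := by
        intro i hik
        show (List.replicate k (strSym s')).flatten = _
        rw [← flat_add, Nat.add_sub_cancel' hik]
      constructor
      · rintro ⟨hocc, c, hc, htc, hct, hmin, h1, h2⟩
        simp only [cuts, List.mem_map, List.mem_range] at hc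
        obtain ⟨j, hj, rfl⟩ := hc
        have hceq := cut_eq hpr htc h1 h2
        have hw0 : 0 < (strSym s').length := by
          rcases Nat.eq_zero_or_pos (strSym s').length with h0 | h0
          · rw [h0, Nat.mul_zero] at htc
            omega
          · exact h0
        have hexp1 : (j + 1) * (strSym s').length
            = j * (strSym s').length + (strSym s').length := by ring
        have hple : pl.length ≤ (strSym s').length := by
          rcases Nat.eq_zero_or_pos j with rfl | hj1
          · omega
          · have hmem : j * (strSym s').length ∈ cuts (Sym.pow s' k) := by
              simp only [cuts, List.mem_map, List.mem_range]
              exact ⟨j - 1, by omega, by rw [show j - 1 + 1 = j from by omega]⟩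
            by_contra hgt
            push_neg at hgt
            have htj : t < j * (strSym s').length := by
              have : (j + 1) * (strSym s').length = j * (strSym s').length + (strSym s').length := by ring
              omega
            have := hmin _ hmem htj
            have : (j + 1) * (strSym s').length = j * (strSym s').length + (strSym s').length := by ring
            omega
        have ht' : t + pl.length = ((List.replicate (j + 1) (strSym s')).flatten).length := by
          rw [length_flat]; omega
        rw [OccAt, hstr (j + 1) (by omega)] at hocc
        obtain ⟨hsuf, hpre⟩ := (occ_split hpr ht').mp hocc
        refine ⟨j + 1, by omega, by omega, by omega, ?_, hpre⟩
        rw [flat_succ_left (strSym s') (by omega : 1 ≤ j + 1)] at hsuf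
        exact suffix_of_suffix_length_le hsuf hple
      · rintro ⟨i, hi1, hik, ht, hplw, hprw⟩
        have hple : pl.length ≤ (strSym s').length := hplw.length_le
        have hw0 : 0 < (strSym s').length := by omega
        have ht' : t + pl.length = ((List.replicate i (strSym s')).flatten).length := by
          rw [length_flat]; omega
        have hocc : OccAt (Sym.pow s' k) (pl ++ pr) t := by
          rw [OccAt, hstr i (by omega)]
          exact (occ_split hpr ht').mpr ⟨hplw.trans (suffix_flat (strSym s') hi1), hprw⟩
        refine ⟨hocc, i * (strSym s').length, ?_, by omega, ?_, ?_, ?_, ?_⟩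
        · simp only [cuts, List.mem_map, List.mem_range]
          exact ⟨i - 1, by omega, by rw [show i - 1 + 1 = i from by omega]⟩
        · rw [List.length_append]; omega
        · intro c' hc' htc'
          simp only [cuts, List.mem_map, List.mem_range] at hc'
          obtain ⟨j, hj, rfl⟩ := hc'
          by_contra hlt
          push_neg at hlt
          have hji : j + 1 < i := lt_of_mul_lt_mul_right hlt (Nat.zero_le _)
          have hmle : (j + 1 + 1) * (strSym s').length ≤ i * (strSym s').length :=
            Nat.mul_le_mul_right _ (by omega)
          have hexp : (j + 1 + 1) * (strSym s').length = (j + 1) * (strSym s').length + (strSym s').length := by ring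
          omega
        · have he : i * (strSym s').length - t = pl.length := by omega
          rw [he, List.take_left]
        · have he : i * (strSym s').length - t = pl.length := by omega
          rw [he, List.drop_left]
    refine ⟨?_, fun hsl hsr => ⟨?_, ?_⟩⟩
    · constructor
      · rintro ⟨t, ht⟩
        obtain ⟨i, hi1, hik, hteq, hplw, hprw⟩ := (key t).mp ht
        exact ⟨hplw, hprw.trans (prefix_flat (strSym s') (by omega))⟩
      · rintro ⟨h1, h2⟩
        have hk2 : 2 ≤ k := by
          by_contra hk
          push_neg at hk
          rw [show k - 1 = 0 from by omega] at h2
          simp only [List.replicate_zero, List.flatten_nil, List.prefix_nil] at h2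
          exact hpr h2
        have hple := h1.length_le
        exact ⟨1 * (strSym s').length - pl.length,
          (key _).mpr ⟨1, le_refl 1, hk2, by omega, h1, h2⟩⟩
    · rintro s1 s2 heq
      exact absurd heq (by simp)
    · rintro s'' k'' heq t
      have hple : pl.length ≤ (strSym s').length := hsl.length_le
      have hw0 : 0 < (strSym s').length := by omega
      have hk2 : 2 ≤ k := by
        by_contra hk
        push_neg at hk
        rw [show k - 1 = 0 from by omega] at hsr
        simp only [List.replicate_zero, List.flatten_nil, List.prefix_nil] at hsr
        exact hpr hsr
      have hprle : pr.length ≤ (k - 1) * (strSym s').length := by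
        have := hsr.length_le
        rwa [length_flat] at this
      rw [key t, length_flat]
      constructor
      · rintro ⟨i, hi1, hik, ht, _, hprw⟩
        refine ⟨i, hi1, ?_, ht⟩
        have hprwle : pr.length ≤ (k - i) * (strSym s').length := by
          have := hprw.length_le
          rwa [length_flat] at this
        have hsplit : (i - 1) * (strSym s').length + (k - i) * (strSym s').length = (k - 1) * (strSym s').length := by
          rw [← Nat.add_mul]
          congr 1
          omega
        have hdiv : i - 1 ≤ ((k - 1) * (strSym s').length - pr.length) / (strSym s').length := by
          rw [Nat.le_div_iff_mul_le hw0, Nat.le_sub_iff_add_le hprle]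
          omega
        omega
      · rintro ⟨i, hi1, hib, ht⟩
        have hdiv : (i - 1) * (strSym s').length ≤ (k - 1) * (strSym s').length - pr.length := by
          rw [← Nat.le_div_iff_mul_le hw0]
          omega
        rw [Nat.le_sub_iff_add_le hprle] at hdiv
        have hik : i + 1 ≤ k := by
          by_contra hik
          push_neg at hik
          have : (k - 1) * (strSym s').length ≤ (i - 1) * (strSym s').length :=
            Nat.mul_le_mul_right _ (by omega)
          omega
        have hsplit : (i - 1) * (strSym s').length + (k - i) * (strSym s').length = (k - 1) * (strSym s').length := by
          rw [← Nat.add_mul]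
          congr 1
          omega
        refine ⟨i, hi1, hik, ht, hsl, ?_⟩
        refine prefix_of_prefix_length_le hsr (prefix_flat (strSym s') (by omega)) ?_
        rw [length_flat]
        omega


end DynStr
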